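/- arXiv:2402.16017 — 2 statements merged into one kernel-verified Lean document; each statement's English description precedes it below -/
import Mathlib

section
/- Given a matrix M with SVD M = USVᵀ and target c > 0, the matrix M' = US'Vᵀ with S'ᵢᵢ = min(Sᵢᵢ, c) satisfies ‖M'‖₂ ≤ c and ‖M - M'‖ is minimal in Frobenius norm among all matrices with spectral norm at most c (M' is the projection of M onto the spectral-norm ball of radius c). -/
open Matrix

/-- The largest singular value (spectral norm) of a real matrix, as the operator
norm of the induced linear map between Euclidean spaces. -/
noncomputable def matrixSpectralNorm {α β : Type*} [Fintype α] [Fintype β] [DecidableEq β]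
    (M : Matrix α β ℝ) : ℝ :=
  ‖LinearMap.toContinuousLinearMap (Matrix.toEuclideanLin M)‖

/-- The Frobenius norm of a real matrix. -/
noncomputable def frobeniusNorm {α β : Type*} [Fintype α] [Fintype β]
    (M : Matrix α β ℝ) : ℝ :=
  Real.sqrt (∑ i, ∑ j, M i j ^ 2)

lemma spectral_apply {α β : Type*} [Fintype α] [Fintype β] [DecidableEq β]
    (A : Matrix α β ℝ) (x : EuclideanSpace ℝ β) :
    (LinearMap.toContinuousLinearMap (Matrix.toEuclideanLin A)) x
      = Matrix.toEuclideanLin A x := rfl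

lemma spectral_le_bound {α β : Type*} [Fintype α] [Fintype β] [DecidableEq β]
    (A : Matrix α β ℝ) {c : ℝ} (hc : 0 ≤ c)
    (h : ∀ x : EuclideanSpace ℝ β, ‖Matrix.toEuclideanLin A x‖ ≤ c * ‖x‖) :
    matrixSpectralNorm A ≤ c :=
  ContinuousLinearMap.opNorm_le_bound _ hc h

lemma spectral_le_apply {α β : Type*} [Fintype α] [Fintype β] [DecidableEq β]
    (A : Matrix α β ℝ) (x : EuclideanSpace ℝ β) :
    ‖Matrix.toEuclideanLin A x‖ ≤ matrixSpectralNorm A * ‖x‖ :=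
  (LinearMap.toContinuousLinearMap (Matrix.toEuclideanLin A)).le_opNorm x

lemma spectral_nonneg {α β : Type*} [Fintype α] [Fintype β] [DecidableEq β]
    (A : Matrix α β ℝ) : 0 ≤ matrixSpectralNorm A := norm_nonneg _

lemma toEuclideanLin_mul_apply {α β γ : Type*} [Fintype α] [Fintype β] [Fintype γ]
    [DecidableEq β] [DecidableEq γ]
    (A : Matrix α β ℝ) (B : Matrix β γ ℝ) (x : EuclideanSpace ℝ γ) :
    Matrix.toEuclideanLin (A * B) x
      = Matrix.toEuclideanLin A (Matrix.toEuclideanLin B x) := by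
  simp [Matrix.toEuclideanLin_apply, Matrix.mulVec_mulVec]

lemma spectral_mul_le {α β γ : Type*} [Fintype α] [Fintype β] [Fintype γ]
    [DecidableEq β] [DecidableEq γ]
    (A : Matrix α β ℝ) (B : Matrix β γ ℝ) :
    matrixSpectralNorm (A * B) ≤ matrixSpectralNorm A * matrixSpectralNorm B := by
  apply spectral_le_bound _ (mul_nonneg (spectral_nonneg A) (spectral_nonneg B))
  intro x
  rw [toEuclideanLin_mul_apply]
  calc ‖Matrix.toEuclideanLin A (Matrix.toEuclideanLin B x)‖
      ≤ matrixSpectralNorm A * ‖Matrix.toEuclideanLin B x‖ := spectral_le_apply A _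
    _ ≤ matrixSpectralNorm A * (matrixSpectralNorm B * ‖x‖) :=
        mul_le_mul_of_nonneg_left (spectral_le_apply B x) (spectral_nonneg A)
    _ = matrixSpectralNorm A * matrixSpectralNorm B * ‖x‖ := by ring

lemma orth_isometry {k l : ℕ} (W : Matrix (Fin k) (Fin l) ℝ) (hW : Wᵀ * W = 1)
    (x : EuclideanSpace ℝ (Fin l)) :
    ‖Matrix.toEuclideanLin W x‖ = ‖x‖ := by
  have hdot : (W *ᵥ ⇑x) ⬝ᵥ (W *ᵥ ⇑x) = ⇑x ⬝ᵥ ⇑x := by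
    rw [Matrix.dotProduct_mulVec]
    have h : (W *ᵥ ⇑x) ᵥ* W = ⇑x := by
      rw [← Matrix.mulVec_transpose, Matrix.mulVec_mulVec, hW, Matrix.one_mulVec]
    rw [h]
  rw [EuclideanSpace.norm_eq, EuclideanSpace.norm_eq]
  congr 1
  have h1 : ∀ i, (Matrix.toEuclideanLin W x) i = (W *ᵥ ⇑x) i := fun _ => rfl
  simp only [h1, Real.norm_eq_abs, sq_abs]
  calc ∑ i, (W *ᵥ ⇑x) i ^ 2 = (W *ᵥ ⇑x) ⬝ᵥ (W *ᵥ ⇑x) := by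
        simp [dotProduct, sq]
    _ = ⇑x ⬝ᵥ ⇑x := hdot
    _ = ∑ i, x i ^ 2 := by simp [dotProduct, sq]

lemma orth_spectral_le_one {k l : ℕ} (W : Matrix (Fin k) (Fin l) ℝ) (hW : Wᵀ * W = 1) :
    matrixSpectralNorm W ≤ 1 := by
  apply spectral_le_bound _ zero_le_one
  intro x
  rw [orth_isometry W hW x, one_mul]

lemma sum_ite_fin {n : ℕ} (k : ℕ) (f : Fin n → ℝ) :
    ∑ j : Fin n, (if (j : ℕ) = k then f j else 0) =
      if h : k < n then f ⟨k, h⟩ else 0 := by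
  split
  · next h =>
    rw [Finset.sum_eq_single (⟨k, h⟩ : Fin n)]
    · simp
    · intro j _ hj
      rw [if_neg]
      intro hk
      exact hj (Fin.ext hk)
    · simp
  · next h =>
    apply Finset.sum_eq_zero
    intro j _
    rw [if_neg]
    intro hk
    exact h (hk ▸ j.isLt)

lemma diag_spectral_le {m n : ℕ} (A : Matrix (Fin m) (Fin n) ℝ) {c : ℝ} (hc : 0 ≤ c)
    (hdiag : ∀ (i : Fin m) (j : Fin n), (i : ℕ) ≠ (j : ℕ) → A i j = 0)
    (hbd : ∀ i j, |A i j| ≤ c) :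
    matrixSpectralNorm A ≤ c := by
  apply spectral_le_bound _ hc
  intro x
  have h1 : ∀ i, (Matrix.toEuclideanLin A x) i = ∑ j, A i j * x j := fun _ => rfl
  rw [EuclideanSpace.norm_eq, EuclideanSpace.norm_eq]
  have hsum : ∑ i, ‖(Matrix.toEuclideanLin A x) i‖ ^ 2 ≤ c ^ 2 * ∑ j, ‖x j‖ ^ 2 := by
    have hxx : ∀ j : Fin n, ‖x j‖ ^ 2 = x j ^ 2 := fun j => by simp [Real.norm_eq_abs, sq_abs]
    simp only [hxx]
    simp only [h1, Real.norm_eq_abs, sq_abs]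
    have hrow : ∀ i : Fin m, ∑ j, A i j * x j =
        if h : (i : ℕ) < n then A i ⟨i, h⟩ * x ⟨i, h⟩ else 0 := by
      intro i
      rw [← sum_ite_fin (i : ℕ) (fun j => A i j * x j)]
      apply Finset.sum_congr rfl
      intro j _
      split
      · rfl
      · next hne => rw [hdiag i j (Ne.symm hne), zero_mul]
    calc ∑ i, (∑ j, A i j * x j) ^ 2
        ≤ ∑ i : Fin m, ∑ j : Fin n, (if (j : ℕ) = (i : ℕ) then c ^ 2 * x j ^ 2 else 0) := by
          apply Finset.sum_le_sum
          intro i _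
          rw [hrow i, sum_ite_fin (i : ℕ) (fun j => c ^ 2 * x j ^ 2)]
          split
          · next h =>
            rw [mul_pow]
            apply mul_le_mul_of_nonneg_right _ (sq_nonneg _)
            have := hbd i ⟨i, h⟩
            calc A i ⟨i, h⟩ ^ 2 = |A i ⟨i, h⟩| ^ 2 := (sq_abs _).symm
              _ ≤ c ^ 2 := by
                  apply pow_le_pow_left₀ (abs_nonneg _) this
          · simp
      _ = ∑ j : Fin n, ∑ i : Fin m, (if (j : ℕ) = (i : ℕ) then c ^ 2 * x j ^ 2 else 0) :=
          Finset.sum_comm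
      _ ≤ ∑ j : Fin n, c ^ 2 * x j ^ 2 := by
          apply Finset.sum_le_sum
          intro j _
          have : ∑ i : Fin m, (if (j : ℕ) = (i : ℕ) then c ^ 2 * x j ^ 2 else 0)
              = ∑ i : Fin m, (if (i : ℕ) = (j : ℕ) then c ^ 2 * x j ^ 2 else 0) := by
            apply Finset.sum_congr rfl
            intro i _
            simp [eq_comm]
          rw [this, sum_ite_fin (j : ℕ) (fun _ => c ^ 2 * x j ^ 2)]
          split
          · exact le_rfl
          · positivity
      _ = c ^ 2 * ∑ j, x j ^ 2 := (Finset.mul_sum _ _ _).symm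
  calc Real.sqrt (∑ i, ‖(Matrix.toEuclideanLin A x) i‖ ^ 2)
      ≤ Real.sqrt (c ^ 2 * ∑ j, ‖x j‖ ^ 2) := Real.sqrt_le_sqrt hsum
    _ = c * Real.sqrt (∑ j, ‖x j‖ ^ 2) := by
        rw [Real.sqrt_mul (sq_nonneg c), Real.sqrt_sq hc]

lemma entry_le_spectral {m n : ℕ} (A : Matrix (Fin m) (Fin n) ℝ) (i : Fin m) (j : Fin n) :
    |A i j| ≤ matrixSpectralNorm A := by
  set y : EuclideanSpace ℝ (Fin m) := Matrix.toEuclideanLin A (EuclideanSpace.single j 1)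
  have hy : y i = A i j := by
    have h0 : y i = ∑ k, A i k * (EuclideanSpace.single j (1:ℝ)) k := rfl
    rw [h0]
    simp [EuclideanSpace.single_apply]
  have h1 : |y i| ≤ ‖y‖ := by
    rw [EuclideanSpace.norm_eq]
    rw [← Real.sqrt_sq_eq_abs]
    apply Real.sqrt_le_sqrt
    have : |y i| ^ 2 ≤ ∑ k, ‖y k‖ ^ 2 := by
      rw [← Real.norm_eq_abs]
      exact Finset.single_le_sum (f := fun k => ‖y k‖ ^ 2)
        (fun k _ => sq_nonneg _) (Finset.mem_univ i)
    simpa [sq_abs] using this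
  have h2 : ‖y‖ ≤ matrixSpectralNorm A := by
    have := spectral_le_apply A (EuclideanSpace.single j 1)
    rwa [EuclideanSpace.norm_single, norm_one, mul_one] at this
  rw [← hy]
  exact h1.trans h2

lemma frob_sq {m n : ℕ} (A : Matrix (Fin m) (Fin n) ℝ) :
    ∑ i, ∑ j, A i j ^ 2 = Matrix.trace (Aᵀ * A) := by
  rw [Finset.sum_comm]
  simp [Matrix.trace, Matrix.diag, Matrix.mul_apply, sq]

lemma frob_conj {m n : ℕ} (U : Matrix (Fin m) (Fin m) ℝ) (V : Matrix (Fin n) (Fin n) ℝ)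
    (hU2 : Uᵀ * U = 1) (hV2 : Vᵀ * V = 1) (A : Matrix (Fin m) (Fin n) ℝ) :
    frobeniusNorm (U * A * Vᵀ) = frobeniusNorm A := by
  unfold frobeniusNorm
  rw [frob_sq, frob_sq]
  congr 1
  have key : (U * A * Vᵀ)ᵀ * (U * A * Vᵀ) = V * (Aᵀ * A) * Vᵀ := by
    have h : Uᵀ * (U * (A * Vᵀ)) = A * Vᵀ := by
      rw [← Matrix.mul_assoc, hU2, Matrix.one_mul]
    simp only [Matrix.transpose_mul, Matrix.transpose_transpose, Matrix.mul_assoc, h]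
  rw [key, Matrix.mul_assoc, Matrix.trace_mul_comm, Matrix.mul_assoc, Matrix.mul_assoc,
    hV2, Matrix.mul_one]

/-- Given `M = U S Vᵀ` an SVD and target `c > 0`, the matrix `M' = U S' Vᵀ` with
`S'ᵢᵢ = min (Sᵢᵢ, c)` satisfies `‖M'‖₂ ≤ c` and minimizes `‖M - ·‖_F` among all
matrices of spectral norm at most `c`. -/
theorem stmt_4 {m n : ℕ} (U : Matrix (Fin m) (Fin m) ℝ) (V : Matrix (Fin n) (Fin n) ℝ)
    (hU : U * Uᵀ = 1 ∧ Uᵀ * U = 1) (hV : V * Vᵀ = 1 ∧ Vᵀ * V = 1)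
    (S : Matrix (Fin m) (Fin n) ℝ)
    (hSdiag : ∀ (i : Fin m) (j : Fin n), (i : ℕ) ≠ (j : ℕ) → S i j = 0)
    (hSnn : ∀ i j, 0 ≤ S i j)
    (M : Matrix (Fin m) (Fin n) ℝ) (hM : M = U * S * Vᵀ)
    (c : ℝ) (hc : 0 < c)
    (M' : Matrix (Fin m) (Fin n) ℝ)
    (hM' : M' = U * (Matrix.of fun i j => min (S i j) c) * Vᵀ) :
    matrixSpectralNorm M' ≤ c ∧
      ∀ B : Matrix (Fin m) (Fin n) ℝ, matrixSpectralNorm B ≤ c →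
        frobeniusNorm (M - M') ≤ frobeniusNorm (M - B) := by
  obtain ⟨hU1, hU2⟩ := hU
  obtain ⟨hV1, hV2⟩ := hV
  set S' : Matrix (Fin m) (Fin n) ℝ := Matrix.of fun i j => min (S i j) c with hS'
  have hS'diag : ∀ (i : Fin m) (j : Fin n), (i : ℕ) ≠ (j : ℕ) → S' i j = 0 := by
    intro i j hij
    simp [hS', hSdiag i j hij, min_eq_left hc.le]
  have hS'bd : ∀ i j, |S' i j| ≤ c := by
    intro i j
    rw [abs_le]
    constructor
    · have : (0:ℝ) ≤ min (S i j) c := le_min (hSnn i j) hc.le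
      simp only [hS', Matrix.of_apply]
      linarith
    · exact min_le_right _ _
  have hUspec : matrixSpectralNorm U ≤ 1 := orth_spectral_le_one U hU2
  have hUTspec : matrixSpectralNorm Uᵀ ≤ 1 := by
    apply orth_spectral_le_one
    rw [Matrix.transpose_transpose]; exact hU1
  have hVspec : matrixSpectralNorm V ≤ 1 := orth_spectral_le_one V hV2
  have hVTspec : matrixSpectralNorm Vᵀ ≤ 1 := by
    apply orth_spectral_le_one
    rw [Matrix.transpose_transpose]; exact hV1
  have hS'spec : matrixSpectralNorm S' ≤ c := diag_spectral_le S' hc.le hS'diag hS'bd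
  constructor
  · rw [hM']
    calc matrixSpectralNorm (U * S' * Vᵀ) ≤ matrixSpectralNorm (U * S') * matrixSpectralNorm Vᵀ :=
          spectral_mul_le _ _
      _ ≤ matrixSpectralNorm (U * S') * 1 :=
          mul_le_mul_of_nonneg_left hVTspec (spectral_nonneg _)
      _ = matrixSpectralNorm (U * S') := mul_one _
      _ ≤ matrixSpectralNorm U * matrixSpectralNorm S' := spectral_mul_le _ _
      _ ≤ 1 * c := mul_le_mul hUspec hS'spec (spectral_nonneg _) zero_le_one
      _ = c := one_mul c
  · intro B hB
    set D : Matrix (Fin m) (Fin n) ℝ := Uᵀ * B * V with hD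
    have hDspec : matrixSpectralNorm D ≤ c := by
      calc matrixSpectralNorm (Uᵀ * B * V) ≤ matrixSpectralNorm (Uᵀ * B) * matrixSpectralNorm V :=
            spectral_mul_le _ _
        _ ≤ matrixSpectralNorm (Uᵀ * B) * 1 :=
            mul_le_mul_of_nonneg_left hVspec (spectral_nonneg _)
        _ = matrixSpectralNorm (Uᵀ * B) := mul_one _
        _ ≤ matrixSpectralNorm Uᵀ * matrixSpectralNorm B := spectral_mul_le _ _
        _ ≤ 1 * c := mul_le_mul hUTspec hB (spectral_nonneg _) zero_le_one
        _ = c := one_mul c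
    have hDbd : ∀ i j, |D i j| ≤ c := fun i j => (entry_le_spectral D i j).trans hDspec
    have hMM' : M - M' = U * (S - S') * Vᵀ := by
      rw [hM, hM', Matrix.mul_sub, Matrix.sub_mul]
    have hMB : M - B = U * (S - D) * Vᵀ := by
      have e1 : U * (Uᵀ * (B * (V * Vᵀ))) = B := by
        rw [hV1, Matrix.mul_one, ← Matrix.mul_assoc, hU1, Matrix.one_mul]
      rw [hM, hD, Matrix.mul_sub, Matrix.sub_mul]
      congr 1
      simp only [Matrix.mul_assoc]
      exact e1.symm
    rw [hMM', hMB, frob_conj U V hU2 hV2, frob_conj U V hU2 hV2]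
    unfold frobeniusNorm
    apply Real.sqrt_le_sqrt
    apply Finset.sum_le_sum
    intro i _
    apply Finset.sum_le_sum
    intro j _
    by_cases hij : (i : ℕ) = (j : ℕ)
    · simp only [Matrix.sub_apply]
      have habs := hDbd i j
      rw [abs_le] at habs
      have hσ := hSnn i j
      by_cases hle : S i j ≤ c
      · have : S' i j = S i j := by simp [hS', min_eq_left hle]
        rw [this]
        simp [sq_nonneg]
      · push_neg at hle
        have hmin : S' i j = c := by simp [hS', min_eq_right hle.le]
        rw [hmin]
        apply pow_le_pow_left₀ (by linarith) (by linarith)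
    · have h1 : S i j = 0 := hSdiag i j hij
      have h2 : S' i j = 0 := hS'diag i j hij
      simp only [Matrix.sub_apply, h1, h2, sub_zero, zero_sub, sub_self]
      simpa using sq_nonneg (D i j)
end

section
/- For a circular convolution with 1 input channel and m output channels with per-channel kernels f^(l), the squared singular values are the sums over channels of the per-channel squared singular values at the same root of unity: σⱼ² = Σ_{l=1}^m (c₀^(l) + 2Σᵢ cᵢ^(l) Re(ω^{ji})) for j = 0, ..., n-1. -/
open Matrix

lemma circ_spec {n : ℕ} [NeZero n] (ω : ℂ) (hω : ω = Complex.exp (2 * Real.pi * Complex.I / n))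
    (a : Fin n → ℝ) (A : Matrix (Fin n) (Fin n) ℝ) (hA : ∀ p q, A p q = a (q - p))
    (Lr : Fin n → ℝ)
    (hLr : ∀ j : Fin n, (Lr j : ℂ) = ∑ d : Fin n, (a d : ℂ) * ω ^ ((j : ℕ) * (d : ℕ))) :
    spectrum ℝ A = Set.range Lr := by
  have hprim : IsPrimitiveRoot ω n := by
    rw [hω]; exact Complex.isPrimitiveRoot_exp n (NeZero.ne n)
  have hωn : ω ^ n = 1 := hprim.pow_eq_one
  have hmod : ∀ (j : Fin n) (x : ℕ), ω ^ ((j : ℕ) * (x % n)) = ω ^ ((j : ℕ) * x) := by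
    intro j x
    have h : ∀ y : ℕ, ω ^ ((j : ℕ) * y) = (ω ^ (j : ℕ)) ^ y := fun y => by rw [pow_mul]
    rw [h, h]
    have hζ : (ω ^ (j : ℕ)) ^ n = 1 := by rw [← pow_mul, mul_comm, pow_mul, hωn, one_pow]
    conv_rhs => rw [← Nat.div_add_mod x n, pow_add, pow_mul, hζ, one_pow, one_mul]
  set F : Matrix (Fin n) (Fin n) ℂ := vandermonde (fun p : Fin n => ω ^ (p : ℕ)) with hF
  have hdetF : F.det ≠ 0 := by
    rw [hF, det_vandermonde_ne_zero_iff]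
    intro p q h
    exact Fin.ext (hprim.pow_inj p.isLt q.isLt h)
  set N : Matrix (Fin n) (Fin n) ℂ := A.map (fun x => (x : ℂ)) with hN
  have key : N * F = F * diagonal (fun j => (Lr j : ℂ)) := by
    ext p j
    rw [mul_apply, mul_diagonal]
    rw [hLr j, Finset.mul_sum]
    rw [← Equiv.sum_comp (Equiv.addLeft p) (fun q => N p q * F q j)]
    apply Finset.sum_congr rfl
    intro d _
    simp only [hN, hF, Equiv.coe_addLeft, map_apply, vandermonde_apply, hA]
    rw [add_sub_cancel_left]
    have : (((p + d : Fin n) : ℕ)) = ((p : ℕ) + (d : ℕ)) % n := by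
      simp [Fin.add_def]
    have h2 : ω ^ (((p + d : Fin n) : ℕ) * (j:ℕ)) = ω ^ ((p:ℕ)*(j:ℕ)) * ω ^ ((j:ℕ)*(d:ℕ)) := by
      rw [mul_comm (((p + d : Fin n)) : ℕ) (j:ℕ), this, hmod, Nat.mul_add, pow_add,
        mul_comm (j:ℕ) (p:ℕ)]
    rw [← pow_mul, ← pow_mul, h2]
    ring
  ext μ
  rw [spectrum.mem_iff, Set.mem_range]
  rw [Matrix.isUnit_iff_isUnit_det, isUnit_iff_ne_zero, not_not]
  have hdet : (algebraMap ℝ (Matrix (Fin n) (Fin n) ℝ) μ - A).det = 0 ↔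
      ((algebraMap ℝ (Matrix (Fin n) (Fin n) ℝ) μ - A).map (fun x => (x : ℂ))).det = 0 := by
    rw [show ((algebraMap ℝ (Matrix (Fin n) (Fin n) ℝ) μ - A).map (fun x => (x : ℂ)))
        = Complex.ofRealHom.mapMatrix (algebraMap ℝ (Matrix (Fin n) (Fin n) ℝ) μ - A) from rfl,
      ← RingHom.map_det]
    simp [Complex.ofRealHom_eq_coe, Complex.ofReal_eq_zero]
  rw [hdet]
  have hmap : ((algebraMap ℝ (Matrix (Fin n) (Fin n) ℝ) μ - A).map (fun x => (x : ℂ))) =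
      algebraMap ℂ (Matrix (Fin n) (Fin n) ℂ) (μ : ℂ) - N := by
    ext p q
    simp [algebraMap_matrix_apply, hN, apply_ite]
  rw [hmap]
  have hconj : (algebraMap ℂ (Matrix (Fin n) (Fin n) ℂ) (μ : ℂ) - N) * F
      = F * diagonal (fun j => (μ : ℂ) - (Lr j : ℂ)) := by
    rw [sub_mul, key]
    have : algebraMap ℂ (Matrix (Fin n) (Fin n) ℂ) (μ : ℂ) * F = F * algebraMap ℂ _ (μ : ℂ) := by
      rw [Algebra.algebraMap_eq_smul_one, smul_mul_assoc, one_mul, mul_smul_comm, mul_one]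
    rw [this, ← mul_sub]
    congr 1
    rw [show algebraMap ℂ (Matrix (Fin n) (Fin n) ℂ) (μ:ℂ) = diagonal (fun _ => (μ:ℂ)) by
      rw [algebraMap_eq_diagonal]; simp, diagonal_sub]
  have hdd : (algebraMap ℂ (Matrix (Fin n) (Fin n) ℂ) (μ : ℂ) - N).det
      = ∏ j : Fin n, ((μ : ℂ) - (Lr j : ℂ)) := by
    have := congrArg Matrix.det hconj
    rw [det_mul, det_mul, det_diagonal, mul_comm F.det] at this
    exact mul_right_cancel₀ hdetF this
  rw [hdd, Finset.prod_eq_zero_iff]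
  constructor
  · rintro ⟨j, -, hj⟩
    exact ⟨j, by exact_mod_cast (sub_eq_zero.mp hj).symm⟩
  · rintro ⟨j, hj⟩
    exact ⟨j, Finset.mem_univ j, by rw [← hj]; simp⟩
lemma stepA (n k : ℕ) [NeZero n] (hkn : k ≤ n) (g : ℕ → ℝ) (hg : ∀ t, k ≤ t → g t = 0)
    (c : ℕ → ℝ) (hc : ∀ i, c i = ∑ t ∈ Finset.range k, g t * g (t + i)) (d : Fin n) :
    ∑ s : Fin n, g (s : ℕ) * g (((s + d : Fin n)) : ℕ) = c (d : ℕ) + c (n - (d : ℕ)) := by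
  have hcn : ∀ i, c i = ∑ t ∈ Finset.range n, g t * g (t + i) := by
    intro i
    rw [hc]
    apply Finset.sum_subset (Finset.range_subset_range.mpr hkn)
    intro t _ htk
    rw [hg t (by simpa using htk)]
    ring
  have hval : ∀ s : Fin n, g (s : ℕ) * g (((s + d : Fin n)) : ℕ)
      = g (s : ℕ) * g (((s : ℕ) + (d : ℕ)) % n) := by
    intro s; rw [Fin.add_def]
  rw [Finset.sum_congr rfl (fun s _ => hval s),
    Fin.sum_univ_eq_sum_range (fun t => g t * g ((t + (d : ℕ)) % n)) n]
  set dv := (d : ℕ) with hdv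
  have hdlt : dv < n := d.isLt
  rw [Finset.range_eq_Ico, ← Finset.sum_Ico_consecutive _ (Nat.zero_le (n - dv)) (Nat.sub_le n dv)]
  congr 1
  · have e1 : ∀ t ∈ Finset.Ico 0 (n - dv), g t * g ((t + dv) % n) = g t * g (t + dv) := by
      intro t ht
      rw [Finset.mem_Ico] at ht
      rw [Nat.mod_eq_of_lt (by omega)]
    rw [Finset.sum_congr rfl e1, hcn dv, Finset.range_eq_Ico]
    apply Finset.sum_subset (Finset.Ico_subset_Ico le_rfl (Nat.sub_le _ _))
    intro t ht htn
    rw [Finset.mem_Ico] at ht htn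
    rw [hg (t + dv) (by omega)]
    ring
  · rw [Finset.sum_Ico_eq_sum_range]
    have hnn : n - (n - dv) = dv := by omega
    rw [hnn]
    have e2 : ∀ s ∈ Finset.range dv,
        g ((n - dv) + s) * g ((((n - dv) + s) + dv) % n) = g s * g (s + (n - dv)) := by
      intro s hs
      rw [Finset.mem_range] at hs
      have h1 : (n - dv) + s + dv = n + s := by omega
      rw [h1, Nat.add_mod_left, Nat.mod_eq_of_lt (by omega), Nat.add_comm (n - dv) s, mul_comm]
    rw [Finset.sum_congr rfl e2, hcn (n - dv)]
    apply Finset.sum_subset (Finset.range_subset_range.mpr hdlt.le)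
    intro s hs hsd
    rw [Finset.mem_range] at hs hsd
    rw [hg (s + (n - dv)) (by omega)]
    ring

lemma chan (n k : ℕ) [NeZero n] (hkn : k ≤ n) (g : ℕ → ℝ) (hg : ∀ t, k ≤ t → g t = 0)
    (c : ℕ → ℝ) (hc : ∀ i, c i = ∑ t ∈ Finset.range k, g t * g (t + i))
    (z : ℂ) (hzn : z ^ n = 1) :
    ((c 0 + 2 * ∑ i ∈ Finset.Ico 1 k, c i * (z ^ i).re : ℝ) : ℂ)
      = ∑ d : Fin n, ((∑ s : Fin n, g (s : ℕ) * g (((s + d : Fin n)) : ℕ) : ℝ) : ℂ)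
          * z ^ (d : ℕ) := by
  have hone : 1 ≤ n := Nat.one_le_iff_ne_zero.mpr (NeZero.ne n)
  have habs : ∀ i : ℕ, ‖z ^ i‖ = 1 := by
    intro i
    have h1 : ‖z‖ = 1 := by
      exact Complex.norm_eq_one_of_pow_eq_one hzn (NeZero.ne n)
    rw [norm_pow, h1, one_pow]
  have hck : ∀ i, k ≤ i → c i = 0 := by
    intro i hi
    rw [hc]
    apply Finset.sum_eq_zero
    intro t _
    rw [hg (t + i) (by omega)]
    ring
  have hconj : ∀ i ∈ Finset.Ico 1 n, z ^ (n - i) = (starRingEnd ℂ) (z ^ i) := by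
    intro i hi
    rw [Finset.mem_Ico] at hi
    have hmul : z ^ (n - i) * z ^ i = 1 := by
      rw [← pow_add, Nat.sub_add_cancel hi.2.le, hzn]
    rw [eq_inv_of_mul_eq_one_left hmul, Complex.inv_eq_conj (habs i)]
  -- rewrite RHS using stepA
  have hstep := stepA n k hkn g hg c hc
  have hrhs : ∑ d : Fin n, ((∑ s : Fin n, g (s : ℕ) * g (((s + d : Fin n)) : ℕ) : ℝ) : ℂ)
        * z ^ (d : ℕ)
      = ∑ i ∈ Finset.range n, ((c i : ℂ) + (c (n - i) : ℂ)) * z ^ i := by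
    rw [← Fin.sum_univ_eq_sum_range (fun i => ((c i : ℂ) + (c (n - i) : ℂ)) * z ^ i) n]
    apply Finset.sum_congr rfl
    intro d _
    rw [hstep d]
    push_cast
    ring
  rw [hrhs]
  have hsplit : ∑ i ∈ Finset.range n, ((c i : ℂ) + (c (n - i) : ℂ)) * z ^ i
      = ∑ i ∈ Finset.range n, (c i : ℂ) * z ^ i
        + ∑ i ∈ Finset.range n, (c (n - i) : ℂ) * z ^ i := by
    rw [← Finset.sum_add_distrib]
    apply Finset.sum_congr rfl
    intro i _
    ring
  rw [hsplit]
  have hIco : ∀ f : ℕ → ℂ, ∑ i ∈ Finset.range n, f i = f 0 + ∑ i ∈ Finset.Ico 1 n, f i := by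
    intro f
    rw [Finset.range_eq_Ico, ← Finset.sum_Ico_consecutive _ (Nat.zero_le 1) hone]
    congr 1
    rw [Finset.sum_Ico_eq_sum_range]
    simp
  rw [hIco (fun i => (c i : ℂ) * z ^ i), hIco (fun i => (c (n - i) : ℂ) * z ^ i)]
  simp only [pow_zero, mul_one, Nat.sub_zero]
  rw [hck n hkn]
  have hrefl : ∑ i ∈ Finset.Ico 1 n, (c (n - i) : ℂ) * z ^ i
      = ∑ i ∈ Finset.Ico 1 n, (c i : ℂ) * z ^ (n - i) := by
    apply Finset.sum_nbij' (fun i => n - i) (fun i => n - i)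
    · intro i hi; rw [Finset.mem_Ico] at hi ⊢; omega
    · intro i hi; rw [Finset.mem_Ico] at hi ⊢; omega
    · intro i hi; rw [Finset.mem_Ico] at hi; omega
    · intro i hi; rw [Finset.mem_Ico] at hi; omega
    · intro i hi
      rw [Finset.mem_Ico] at hi
      have : n - (n - i) = i := by omega
      rw [this]
  rw [hrefl]
  have hcomb : ∑ i ∈ Finset.Ico 1 n, (c i : ℂ) * z ^ i
        + ∑ i ∈ Finset.Ico 1 n, (c i : ℂ) * z ^ (n - i)
      = ∑ i ∈ Finset.Ico 1 n, (c i : ℂ) * (2 * ((z ^ i).re : ℂ)) := by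
    rw [← Finset.sum_add_distrib]
    apply Finset.sum_congr rfl
    intro i hi
    rw [hconj i hi, ← mul_add, Complex.add_conj]
    push_cast
    ring
  have hrestrict : ∑ i ∈ Finset.Ico 1 n, (c i : ℂ) * (2 * ((z ^ i).re : ℂ))
      = ∑ i ∈ Finset.Ico 1 k, (c i : ℂ) * (2 * ((z ^ i).re : ℂ)) := by
    symm
    apply Finset.sum_subset (Finset.Ico_subset_Ico le_rfl hkn)
    intro i hi hik
    rw [Finset.mem_Ico] at hi hik
    rw [hck i (by omega)]
    simp
  rw [show ((c 0 : ℝ) : ℂ) + ∑ i ∈ Finset.Ico 1 n, (c i : ℂ) * z ^ i + (((0:ℝ):ℂ)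
        + ∑ i ∈ Finset.Ico 1 n, (c i : ℂ) * z ^ (n - i))
      = ((c 0 : ℝ) : ℂ) + (∑ i ∈ Finset.Ico 1 n, (c i : ℂ) * z ^ i
        + ∑ i ∈ Finset.Ico 1 n, (c i : ℂ) * z ^ (n - i)) from by push_cast; ring,
    hcomb, hrestrict]
  push_cast
  congr 1
  rw [Finset.mul_sum]
  exact Finset.sum_congr rfl (fun i _ => by ring)


/-- For a circular convolution with 1 input channel and `m` output channels with
per-channel kernels `f⁽ˡ⁾`, the squared singular values are the sums over channels
of the per-channel squared singular values at the same root of unity. -/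
theorem stmt_12 {n k m : ℕ} [NeZero n] (hkn : k ≤ n) (f : Fin m → Fin k → ℝ)
    (fe : Fin m → ℕ → ℝ)
    (hfe : ∀ l j, fe l j = if h : j < k then f l ⟨j, h⟩ else 0)
    (c : Fin m → ℕ → ℝ)
    (hc : ∀ l i, c l i = ∑ t ∈ Finset.range k, fe l t * fe l (t + i))
    (M : Matrix (Fin m × Fin n) (Fin n) ℝ)
    (hM : ∀ l p q, M (l, p) q = fe l ((q - p : Fin n) : ℕ))
    (ω : ℂ) (hω : ω = Complex.exp (2 * Real.pi * Complex.I / n)) :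
    spectrum ℝ (Mᵀ * M) =
      Set.range (fun j : Fin n =>
        ∑ l : Fin m,
          (c l 0 + 2 * ∑ i ∈ Finset.Ico 1 k, c l i * (ω ^ ((j : ℕ) * i)).re)) := by
  have hg : ∀ l t, k ≤ t → fe l t = 0 := by
    intro l t ht
    rw [hfe, dif_neg (by omega)]
  apply circ_spec ω hω
    (fun d => ∑ l : Fin m, ∑ s : Fin n, fe l (s : ℕ) * fe l (((s + d : Fin n)) : ℕ))
  · -- circulant structure
    intro p q
    rw [mul_apply, Fintype.sum_prod_type]
    apply Finset.sum_congr rfl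
    intro l _
    simp only [transpose_apply, hM]
    rw [← Equiv.sum_comp (Equiv.subLeft p)
      (fun r => fe l (((p - r : Fin n)) : ℕ) * fe l (((q - r : Fin n)) : ℕ))]
    apply Finset.sum_congr rfl
    intro s _
    simp only [Equiv.subLeft_apply]
    have h1 : p - (p - s) = s := sub_sub_cancel p s
    have h2 : q - (p - s) = s + (q - p) := by abel
    rw [h1, h2]
  · -- eigenvalues
    intro j
    have hz : (ω ^ ((j : ℕ))) ^ n = 1 := by
      have hprim : IsPrimitiveRoot ω n := by
        rw [hω]; exact Complex.isPrimitiveRoot_exp n (NeZero.ne n)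
      rw [← pow_mul, mul_comm, pow_mul, hprim.pow_eq_one, one_pow]
    have key : ∀ l : Fin m,
        ((c l 0 + 2 * ∑ i ∈ Finset.Ico 1 k, c l i * (ω ^ ((j : ℕ) * i)).re : ℝ) : ℂ)
          = ∑ d : Fin n, ((∑ s : Fin n, fe l (s : ℕ) * fe l (((s + d : Fin n)) : ℕ) : ℝ) : ℂ)
              * ω ^ ((j : ℕ) * (d : ℕ)) := by
      intro l
      have h := chan n k hkn (fe l) (hg l) (c l) (hc l) (ω ^ ((j : ℕ))) hz
      simp only [← pow_mul] at h
      exact h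
    calc ((∑ l : Fin m,
          (c l 0 + 2 * ∑ i ∈ Finset.Ico 1 k, c l i * (ω ^ ((j : ℕ) * i)).re) : ℝ) : ℂ)
        = ∑ l : Fin m, ((c l 0 + 2 * ∑ i ∈ Finset.Ico 1 k,
            c l i * (ω ^ ((j : ℕ) * i)).re : ℝ) : ℂ) := by push_cast; rfl
      _ = ∑ l : Fin m, ∑ d : Fin n,
            ((∑ s : Fin n, fe l (s : ℕ) * fe l (((s + d : Fin n)) : ℕ) : ℝ) : ℂ)
              * ω ^ ((j : ℕ) * (d : ℕ)) := Finset.sum_congr rfl (fun l _ => key l)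
      _ = ∑ d : Fin n, ∑ l : Fin m,
            ((∑ s : Fin n, fe l (s : ℕ) * fe l (((s + d : Fin n)) : ℕ) : ℝ) : ℂ)
              * ω ^ ((j : ℕ) * (d : ℕ)) := Finset.sum_comm
      _ = ∑ d : Fin n,
            ((∑ l : Fin m, ∑ s : Fin n, fe l (s : ℕ) * fe l (((s + d : Fin n)) : ℕ) : ℝ) : ℂ)
              * ω ^ ((j : ℕ) * (d : ℕ)) := by
          apply Finset.sum_congr rfl
          intro d _
          rw [← Finset.sum_mul]
          push_cast
          rfl
end
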